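/- arXiv:1207.1760 — 3 statements merged into one kernel-verified Lean document; each statement's English description precedes it below -/
import Mathlib

section
/- Let 0 < p < 1, σ > 0, μ > 0, and let B, Z₀, Z₁ be independent random variables on a probability space with P(B = 1) = p = 1 − P(B = 0), Z₀ ~ N(0, μ), Z₁ ~ N(0, σ² + μ). Put Q = Z₁ if B = 1 and Q = Z₀ if B = 0, and let τ = 2 · ((σ² + μ)/(σ²/μ)) · ln( (1 − p) · √(σ²/μ + 1) / p ). Assume τ ≥ 0. Then the threshold detector b̂(q) = 1 if q² > τ and b̂(q) = 0 otherwise satisfies P(b̂(Q) ≠ B) = (1 − p) · erfc(√(τ/(2μ))) + p · erf(√(τ/(2(σ² + μ)))). -/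
open MeasureTheory ProbabilityTheory Real

/-- The Gauss error function `erf x = (2/√π) ∫₀ˣ e^{−t²} dt`. -/
noncomputable def erf (x : ℝ) : ℝ :=
  (2 / Real.sqrt Real.pi) * ∫ t in (0:ℝ)..x, Real.exp (-t ^ 2)

/-- The complementary error function `erfc = 1 − erf`. -/
noncomputable def erfc (x : ℝ) : ℝ := 1 - erf x

/-!
On the event `B = b` the detector errs exactly when `Z_b` lands on the wrong side of the
threshold (`Z₁² ≤ τ`, resp. `Z₀² > τ`), so independence factors the error probability as
`P(B = 0) P(Z₀² > τ) + P(B = 1) P(Z₁² ≤ τ)`. For `Z ∼ N(0, v)` the substitution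
`t = x / √(2v)` turns `P(Z² ≤ τ)` into `erf √(τ / (2v))`, by evenness of `e^{-t²}`.
-/

open scoped NNReal

lemma erf_nonneg {x : ℝ} (hx : 0 ≤ x) : 0 ≤ erf x :=
  mul_nonneg (by positivity) (intervalIntegral.integral_nonneg hx fun t _ => (exp_pos _).le)

lemma integral_neg_self_eq_two_mul_of_even {f : ℝ → ℝ} (hf : Continuous f)
    (heven : ∀ x, f (-x) = f x) (a : ℝ) :
    ∫ x in (-a)..a, f x = 2 * ∫ x in (0:ℝ)..a, f x := by
  have hleft : ∫ x in (-a)..0, f x = ∫ x in (0:ℝ)..a, f x := by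
    simpa [heven] using (intervalIntegral.integral_comp_neg (a := 0) (b := a) f).symm
  rw [← intervalIntegral.integral_add_adjacent_intervals (hf.intervalIntegrable _ _)
    (hf.intervalIntegrable _ _), hleft, two_mul]

lemma gaussianReal_Icc_neg_self {v : ℝ≥0} (hv : v ≠ 0) {a : ℝ} (ha : 0 ≤ a) :
    gaussianReal 0 v (Set.Icc (-a) a) = ENNReal.ofReal (erf (a / √(2 * v))) := by
  have hv₀ : (0 : ℝ) < v := by positivity
  set s := √(2 * v) with hs
  have hs₀ : 0 < s := by positivity
  have hpdf : ∀ x, gaussianPDFReal 0 v x = (√π * s)⁻¹ * exp (-(x / s) ^ 2) := by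
    intro x
    rw [gaussianPDFReal, hs, ← sqrt_mul pi_pos.le, div_pow, sq_sqrt (by positivity)]
    ring_nf
  rw [gaussianReal_apply_eq_integral _ hv, integral_Icc_eq_integral_Ioc,
    ← intervalIntegral.integral_of_le (by linarith)]
  simp_rw [hpdf]
  rw [intervalIntegral.integral_const_mul,
    intervalIntegral.integral_comp_div (fun t => exp (-t ^ 2)) hs₀.ne', neg_div,
    integral_neg_self_eq_two_mul_of_even (by fun_prop) (by simp), erf, smul_eq_mul]
  field_simp

lemma erf_le_one {x : ℝ} (hx : 0 ≤ x) : erf x ≤ 1 := by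
  -- `erf x` is the mass of `[-x, x]` under `N(0, 1/2)`.
  have h := gaussianReal_Icc_neg_self (v := 2⁻¹) (by norm_num) hx
  norm_num at h
  exact ENNReal.ofReal_le_one.mp (h ▸ prob_le_one)

lemma erfc_nonneg {x : ℝ} (hx : 0 ≤ x) : 0 ≤ erfc x :=
  sub_nonneg.mpr (erf_le_one hx)

lemma gaussianReal_setOf_sq_le {v : ℝ≥0} (hv : v ≠ 0) {τ : ℝ} (hτ : 0 ≤ τ) :
    gaussianReal 0 v {x | x ^ 2 ≤ τ} = ENNReal.ofReal (erf √(τ / (2 * v))) := by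
  have hset : {x : ℝ | x ^ 2 ≤ τ} = Set.Icc (-√τ) √τ := by
    ext x; simpa using Real.sq_le hτ
  rw [hset, gaussianReal_Icc_neg_self hv (sqrt_nonneg τ), sqrt_div hτ]

lemma gaussianReal_setOf_lt_sq {v : ℝ≥0} (hv : v ≠ 0) {τ : ℝ} (hτ : 0 ≤ τ) :
    gaussianReal 0 v {x | τ < x ^ 2} = ENNReal.ofReal (erfc √(τ / (2 * v))) := by
  have hmeas : MeasurableSet {x : ℝ | x ^ 2 ≤ τ} := measurableSet_le (by fun_prop) measurable_const
  have hcompl : {x : ℝ | τ < x ^ 2} = {x | x ^ 2 ≤ τ}ᶜ := by ext x; simp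
  rw [hcompl, prob_compl_eq_one_sub hmeas, gaussianReal_setOf_sq_le hv hτ, erfc,
    ENNReal.ofReal_sub _ (erf_nonneg (sqrt_nonneg _)), ENNReal.ofReal_one]

section

variable {Ω α : Type*} [MeasurableSpace Ω] {P : Measure Ω}

lemma ae_eq_or_eq_of_measure_add_eq_one [IsProbabilityMeasure P] [MeasurableSpace α]
    [MeasurableSingletonClass α] {B : Ω → α} (hB : Measurable B) {a b : α} (hab : a ≠ b)
    (h : P {ω | B ω = a} + P {ω | B ω = b} = 1) : ∀ᵐ ω ∂P, B ω = a ∨ B ω = b := by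
  have hmeas (c : α) : MeasurableSet {ω | B ω = c} := hB (measurableSet_singleton c)
  have hunion : P ({ω | B ω = a} ∪ {ω | B ω = b}) = 1 := by
    rw [measure_union (Set.disjoint_left.mpr fun ω ha hb => hab (ha.symm.trans hb)) (hmeas b), h]
  exact (prob_compl_eq_zero_iff ((hmeas a).union (hmeas b))).mpr hunion

lemma measure_setOf_threshold_ne_eq {B Z₀ Z₁ : Ω → ℝ} (hB : Measurable B)
    (hZ₀ : Measurable Z₀) (hZ₁ : Measurable Z₁)
    (hbin : ∀ᵐ ω ∂P, B ω = 0 ∨ B ω = 1) (hind₀ : IndepFun B Z₀ P) (hind₁ : IndepFun B Z₁ P)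
    (τ : ℝ) :
    P {ω | (if τ < (if B ω = 1 then Z₁ ω else Z₀ ω) ^ 2 then 1 else 0) ≠ B ω}
      = P {ω | B ω = 0} * P.map Z₀ {x | τ < x ^ 2}
        + P {ω | B ω = 1} * P.map Z₁ {x | x ^ 2 ≤ τ} := by
  have hle : MeasurableSet {x : ℝ | x ^ 2 ≤ τ} := measurableSet_le (by fun_prop) measurable_const
  have hlt : MeasurableSet {x : ℝ | τ < x ^ 2} := measurableSet_lt measurable_const (by fun_prop)
  have hevent : {ω | (if τ < (if B ω = 1 then Z₁ ω else Z₀ ω) ^ 2 then 1 else 0) ≠ B ω}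
      =ᵐ[P] (B ⁻¹' {0} ∩ Z₀ ⁻¹' {x | τ < x ^ 2} ∪ B ⁻¹' {1} ∩ Z₁ ⁻¹' {x | x ^ 2 ≤ τ} :
        Set Ω) := by
    refine Filter.eventuallyEq_set.mpr ?_
    filter_upwards [hbin] with ω hω
    rcases hω with h | h <;> simp [h]
  rw [measure_congr hevent, measure_union, hind₀.measure_inter_preimage_eq_mul _ _
    (measurableSet_singleton _) hlt, hind₁.measure_inter_preimage_eq_mul _ _
    (measurableSet_singleton _) hle, Measure.map_apply hZ₀ hlt, Measure.map_apply hZ₁ hle]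
  · rfl
  · exact Set.disjoint_left.mpr fun ω h₀ h₁ => zero_ne_one (h₀.1.symm.trans h₁.1)
  · exact (hB (measurableSet_singleton 1)).inter (hZ₁ hle)

end

theorem mmsue_threshold_error_probability_general
    {Ω : Type*} [MeasurableSpace Ω] (P : Measure Ω) [IsProbabilityMeasure P]
    (p : ℝ) (hp : 0 < p) (hp1 : p < 1)
    (σ μ : NNReal) (hμ : 0 < μ)
    (B Z₀ Z₁ : Ω → ℝ) (hB : Measurable B) (hZ₀ : Measurable Z₀) (hZ₁ : Measurable Z₁)
    (hindep : iIndepFun ![B, Z₀, Z₁] P)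
    (hB1 : P {ω | B ω = 1} = ENNReal.ofReal p)
    (hB0 : P {ω | B ω = 0} = ENNReal.ofReal (1 - p))
    (hZ₀law : Measure.map Z₀ P = gaussianReal 0 μ)
    (hZ₁law : Measure.map Z₁ P = gaussianReal 0 (σ ^ 2 + μ))
    (Q : Ω → ℝ) (hQ : Q = fun ω => if B ω = 1 then Z₁ ω else Z₀ ω)
    (τ : ℝ)
    (hτ0 : 0 ≤ τ)
    (bhat : ℝ → ℝ) (hbhat : bhat = fun q => if τ < q ^ 2 then 1 else 0) :
    P {ω | bhat (Q ω) ≠ B ω}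
      = ENNReal.ofReal ((1 - p) * erfc (Real.sqrt (τ / (2 * μ)))
          + p * erf (Real.sqrt (τ / (2 * ((σ:ℝ) ^ 2 + μ))))) := by
  have hbin : ∀ᵐ ω ∂P, B ω = 0 ∨ B ω = 1 := by
    refine ae_eq_or_eq_of_measure_add_eq_one hB zero_ne_one ?_
    rw [hB0, hB1, ← ENNReal.ofReal_add (by linarith) hp.le, sub_add_cancel, ENNReal.ofReal_one]
  have hind₀ : IndepFun B Z₀ P := by simpa using hindep.indepFun (show (0 : Fin 3) ≠ 1 by decide)
  have hind₁ : IndepFun B Z₁ P := by simpa using hindep.indepFun (show (0 : Fin 3) ≠ 2 by decide)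
  subst hQ hbhat
  rw [measure_setOf_threshold_ne_eq hB hZ₀ hZ₁ hbin hind₀ hind₁, hB0, hB1, hZ₀law, hZ₁law,
    gaussianReal_setOf_lt_sq hμ.ne' hτ0, gaussianReal_setOf_sq_le (by positivity) hτ0,
    ← ENNReal.ofReal_mul (by linarith), ← ENNReal.ofReal_mul hp.le,
    ← ENNReal.ofReal_add (mul_nonneg (by linarith) (erfc_nonneg (sqrt_nonneg _)))
      (mul_nonneg hp.le (erf_nonneg (sqrt_nonneg _))), NNReal.coe_add, NNReal.coe_pow]

/-- **Corollary 2 (per-coordinate MMSuE).**  In the sparse Gaussian mixture model where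
`B ∼ Bernoulli(p)`, `Z₀ ∼ N(0, μ)`, `Z₁ ∼ N(0, σ² + μ)` are independent and `Q = Z₁` when
`B = 1`, `Q = Z₀` when `B = 0`, the threshold detector `b̂(q) = 1_{q² > τ}` has error
probability `(1 − p) erfc(√(τ/(2μ))) + p erf(√(τ/(2(σ² + μ))))`. -/
theorem mmsue_threshold_error_probability
    {Ω : Type*} [MeasurableSpace Ω] (P : Measure Ω) [IsProbabilityMeasure P]
    (p : ℝ) (hp : 0 < p) (hp1 : p < 1)
    (σ μ : NNReal) (hσ : 0 < σ) (hμ : 0 < μ)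
    (B Z₀ Z₁ : Ω → ℝ) (hB : Measurable B) (hZ₀ : Measurable Z₀) (hZ₁ : Measurable Z₁)
    (hindep : iIndepFun ![B, Z₀, Z₁] P)
    (hB1 : P {ω | B ω = 1} = ENNReal.ofReal p)
    (hB0 : P {ω | B ω = 0} = ENNReal.ofReal (1 - p))
    (hZ₀law : Measure.map Z₀ P = gaussianReal 0 μ)
    (hZ₁law : Measure.map Z₁ P = gaussianReal 0 (σ ^ 2 + μ))
    (Q : Ω → ℝ) (hQ : Q = fun ω => if B ω = 1 then Z₁ ω else Z₀ ω)
    (τ : ℝ)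
    (hτ : τ = 2 * (((σ:ℝ) ^ 2 + μ) / ((σ:ℝ) ^ 2 / μ))
        * Real.log ((1 - p) * Real.sqrt ((σ:ℝ) ^ 2 / μ + 1) / p))
    (hτ0 : 0 ≤ τ)
    (bhat : ℝ → ℝ) (hbhat : bhat = fun q => if τ < q ^ 2 then 1 else 0) :
    P {ω | bhat (Q ω) ≠ B ω}
      = ENNReal.ofReal ((1 - p) * erfc (Real.sqrt (τ / (2 * μ)))
          + p * erf (Real.sqrt (τ / (2 * ((σ:ℝ) ^ 2 + μ))))) :=
  mmsue_threshold_error_probability_general P p hp hp1 σ μ hμ B Z₀ Z₁ hB hZ₀ hZ₁ hindep hB1 hB0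
    hZ₀law hZ₁law Q hQ τ hτ0 bhat hbhat
end

section
/- Let 0 < p < 1, 0 < β < 1, σ > 0, μ > 0, and let B, Z₀, Z₁ be independent random variables on a probability space with P(B = 1) = p = 1 − P(B = 0), Z₀ ~ N(0, μ), Z₁ ~ N(0, σ² + μ). Put Q = Z₁ if B = 1 and Q = Z₀ if B = 0, and let τ′ = 2 · ((σ² + μ)/(σ²/μ)) · ln( β(1 − p) · √(σ²/μ + 1) / ((1 − β)p) ). Then for every measurable detector b̂ : ℝ → {0, 1}, E[ β · 1_{Q² > τ′, B = 0} + (1 − β) · 1_{Q² ≤ τ′, B = 1} ] ≤ E[ β · 1_{b̂(Q) = 1, B = 0} + (1 − β) · 1_{b̂(Q) = 0, B = 1} ]; that is, the threshold rule b̂*(q) = 1_{q² > τ′} minimizes the expected weighted-support error among all measurable detectors. -/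
open MeasureTheory ProbabilityTheory Real
open scoped NNReal

/-!
The weighted error of the detector that declares `B = 1` exactly when `Q ∈ S` is
`(1 - β) p + ∫_S (β (1 - p) f₀ - (1 - β) p f₁)`, where `f₀`, `f₁` are the densities of
`N(0, μ)` and `N(0, σ² + μ)`. Over all measurable `S`, this is minimized by the set where the
integrand is negative, and since `f₁ / f₀` is an increasing function of `q²`, that set is
`{q | τ′ < q²}`.
-/

lemma ProbabilityTheory.IndepFun.measureReal_inter_preimage_eq_mul {Ω α γ : Type*}
    [MeasurableSpace Ω] [MeasurableSpace α] [MeasurableSpace γ] {P : Measure Ω}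
    {X : Ω → α} {Y : Ω → γ} (h : IndepFun X Y P) {s : Set α} {t : Set γ}
    (hs : MeasurableSet s) (ht : MeasurableSet t) :
    P.real (X ⁻¹' s ∩ Y ⁻¹' t) = P.real (X ⁻¹' s) * P.real (Y ⁻¹' t) := by
  simp only [measureReal_def, h.measure_inter_preimage_eq_mul s t hs ht, ENNReal.toReal_mul]

lemma setIntegral_le_setIntegral_of_mem_iff_neg {α : Type*} [MeasurableSpace α]
    {ν : Measure α} {g : α → ℝ} (hg : Integrable g ν) {T S : Set α}
    (hT : MeasurableSet T) (hS : MeasurableSet S) (hTg : ∀ x, x ∈ T ↔ g x < 0) :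
    ∫ x in T, g x ∂ν ≤ ∫ x in S, g x ∂ν := by
  rw [← integral_indicator hT, ← integral_indicator hS]
  refine integral_mono (hg.indicator hT) (hg.indicator hS) fun x => ?_
  by_cases hxT : x ∈ T <;> by_cases hxS : x ∈ S <;>
    simp only [Set.indicator_of_mem, Set.indicator_of_notMem, hxT, hxS, not_false_eq_true,
      le_refl]
  · exact ((hTg x).mp hxT).le
  · exact not_lt.mp (mt (hTg x).mpr hxT)

lemma integral_weightedError_eq {Ω : Type*} [MeasurableSpace Ω] {P : Measure Ω}
    [IsFiniteMeasure P] {B Z₀ Z₁ Q : Ω → ℝ} (hB : Measurable B) (hZ₀ : Measurable Z₀)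
    (hZ₁ : Measurable Z₁) (hZ₀B : IndepFun Z₀ B P) (hZ₁B : IndepFun Z₁ B P)
    (hQ : Q = fun ω => if B ω = 1 then Z₁ ω else Z₀ ω) (β : ℝ) {S : Set ℝ}
    [DecidablePred (· ∈ S)] (hS : MeasurableSet S) :
    ∫ ω, (β * (if Q ω ∈ S ∧ B ω = 0 then 1 else 0)
        + (1 - β) * (if Q ω ∉ S ∧ B ω = 1 then 1 else 0)) ∂P
      = β * P.real (B ⁻¹' {0}) * (P.map Z₀).real S
        + (1 - β) * P.real (B ⁻¹' {1}) * (P.map Z₁).real Sᶜ := by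
  have hfalsePos : {ω | Q ω ∈ S ∧ B ω = 0} = Z₀ ⁻¹' S ∩ B ⁻¹' {0} := by
    ext ω
    by_cases h : B ω = 1 <;> simp_all
  have hfalseNeg : {ω | Q ω ∉ S ∧ B ω = 1} = Z₁ ⁻¹' Sᶜ ∩ B ⁻¹' {1} := by
    ext ω
    by_cases h : B ω = 1 <;> simp_all
  have hmeasPos : MeasurableSet (Z₀ ⁻¹' S ∩ B ⁻¹' {0}) :=
    (hZ₀ hS).inter (hB (measurableSet_singleton 0))
  have hmeasNeg : MeasurableSet (Z₁ ⁻¹' Sᶜ ∩ B ⁻¹' {1}) :=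
    (hZ₁ hS.compl).inter (hB (measurableSet_singleton 1))
  calc _ = ∫ ω, (β * (Z₀ ⁻¹' S ∩ B ⁻¹' {0}).indicator 1 ω
        + (1 - β) * (Z₁ ⁻¹' Sᶜ ∩ B ⁻¹' {1}).indicator 1 ω) ∂P := by
        simp only [← hfalsePos, ← hfalseNeg, Set.indicator_apply, Set.mem_ofPred_eq,
          Pi.one_apply]
    _ = β * P.real (Z₀ ⁻¹' S ∩ B ⁻¹' {0}) + (1 - β) * P.real (Z₁ ⁻¹' Sᶜ ∩ B ⁻¹' {1}) := by
        rw [integral_add, integral_const_mul, integral_const_mul, integral_indicator_one hmeasPos,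
          integral_indicator_one hmeasNeg]
        · exact ((integrable_const 1).indicator hmeasPos).const_mul β
        · exact ((integrable_const 1).indicator hmeasNeg).const_mul (1 - β)
    _ = _ := by
        rw [hZ₀B.measureReal_inter_preimage_eq_mul hS (measurableSet_singleton 0),
          hZ₁B.measureReal_inter_preimage_eq_mul hS.compl (measurableSet_singleton 1),
          map_measureReal_apply hZ₀ hS, map_measureReal_apply hZ₁ hS.compl]
        ring

lemma measureReal_gaussianReal_eq_setIntegral (m : ℝ) {v : ℝ≥0} (hv : v ≠ 0) (S : Set ℝ) :
    (gaussianReal m v).real S = ∫ x in S, gaussianPDFReal m v x := by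
  rw [measureReal_def, gaussianReal_apply_eq_integral m hv, ENNReal.toReal_ofReal
    (setIntegral_nonneg_of_ae (.of_forall fun x => gaussianPDFReal_nonneg m v x))]

lemma mul_measureReal_add_mul_measureReal_compl_gaussianReal (m a b : ℝ) {v₀ v₁ : ℝ≥0}
    (hv₀ : v₀ ≠ 0) (hv₁ : v₁ ≠ 0) {S : Set ℝ} (hS : MeasurableSet S) :
    a * (gaussianReal m v₀).real S + b * (gaussianReal m v₁).real Sᶜ
      = b + ∫ x in S, (a * gaussianPDFReal m v₀ x - b * gaussianPDFReal m v₁ x) := by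
  rw [probReal_compl_eq_one_sub hS, measureReal_gaussianReal_eq_setIntegral m hv₀,
    measureReal_gaussianReal_eq_setIntegral m hv₁, integral_sub, integral_const_mul,
    integral_const_mul]
  · ring
  · exact ((integrable_gaussianPDFReal m v₀).const_mul a).integrableOn
  · exact ((integrable_gaussianPDFReal m v₁).const_mul b).integrableOn

lemma mul_gaussianPDFReal_lt_mul_gaussianPDFReal_add_iff {a b : ℝ} (ha : 0 < a) (hb : 0 < b)
    {s d : ℝ≥0} (hs : 0 < s) (hd : 0 < d) (x : ℝ) :
    a * gaussianPDFReal 0 s x < b * gaussianPDFReal 0 (d + s) x ↔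
      2 * (((d : ℝ) + s) / ((d : ℝ) / s)) * log (a * √((d : ℝ) / s + 1) / b) < x ^ 2 := by
  have hs' : (0 : ℝ) < s := hs
  have hd' : (0 : ℝ) < d := hd
  set r := √((d : ℝ) / s + 1) with hr_def
  set c := (d : ℝ) / (2 * s * (d + s)) with hc_def
  have hr : 0 < r := sqrt_pos.mpr (by positivity)
  have hc : 0 < c := by positivity
  have hratio : b * gaussianPDFReal 0 (d + s) x
      = b / r * exp (c * x ^ 2) * gaussianPDFReal 0 s x := by
    have hsqrt : √(2 * π * ((d : ℝ) + s)) = r * √(2 * π * s) := by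
      rw [hr_def, ← sqrt_mul (by positivity)]
      congr 1
      field_simp
    have hexp : -x ^ 2 / (2 * ((d : ℝ) + s)) = c * x ^ 2 + -x ^ 2 / (2 * s) := by
      rw [hc_def]
      field_simp
      ring
    simp only [gaussianPDFReal_def, NNReal.coe_add, sub_zero]
    rw [hsqrt, hexp, exp_add]
    field_simp
  rw [hratio, mul_lt_mul_iff_left₀ (gaussianPDFReal_pos 0 s x hs.ne'),
    ← div_lt_iff₀' (div_pos hb hr), ← log_lt_iff_lt_exp (by positivity),
    ← div_lt_iff₀' hc, show a / (b / r) = a * r / b by field_simp]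
  congr! 1
  rw [hc_def]
  field_simp

/-- **Bayes optimality of the weighted threshold rule (Corollary 3, equation (21)).**  In the
sparse Gaussian mixture model, the threshold rule `b̂*(q) = 1_{q² > τ′}` minimizes the expected
weighted-support error `E[β·1_{false positive} + (1 − β)·1_{false negative}]` among all
measurable `{0,1}`-valued detectors. -/
theorem weighted_threshold_rule_is_bayes_optimal
    {Ω : Type*} [MeasurableSpace Ω] (P : Measure Ω) [IsProbabilityMeasure P]
    (p β : ℝ) (hp : 0 < p) (hp1 : p < 1) (hβ : 0 < β) (hβ1 : β < 1)
    (σ μ : NNReal) (hσ : 0 < σ) (hμ : 0 < μ)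
    (B Z₀ Z₁ : Ω → ℝ) (hB : Measurable B) (hZ₀ : Measurable Z₀) (hZ₁ : Measurable Z₁)
    (hindep : iIndepFun ![B, Z₀, Z₁] P)
    (hB1 : P {ω | B ω = 1} = ENNReal.ofReal p)
    (hB0 : P {ω | B ω = 0} = ENNReal.ofReal (1 - p))
    (hZ₀law : Measure.map Z₀ P = gaussianReal 0 μ)
    (hZ₁law : Measure.map Z₁ P = gaussianReal 0 (σ ^ 2 + μ))
    (Q : Ω → ℝ) (hQ : Q = fun ω => if B ω = 1 then Z₁ ω else Z₀ ω)
    (τ' : ℝ)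
    (hτ' : τ' = 2 * (((σ:ℝ) ^ 2 + μ) / ((σ:ℝ) ^ 2 / μ))
        * Real.log (β * (1 - p) * Real.sqrt ((σ:ℝ) ^ 2 / μ + 1) / ((1 - β) * p)))
    (bhat : ℝ → ℝ) (hbhat : Measurable bhat)
    (hbhat01 : ∀ q, bhat q = 0 ∨ bhat q = 1) :
    ∫ ω, (β * (if τ' < Q ω ^ 2 ∧ B ω = 0 then 1 else 0)
        + (1 - β) * (if Q ω ^ 2 ≤ τ' ∧ B ω = 1 then 1 else 0)) ∂P
      ≤ ∫ ω, (β * (if bhat (Q ω) = 1 ∧ B ω = 0 then 1 else 0)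
        + (1 - β) * (if bhat (Q ω) = 0 ∧ B ω = 1 then 1 else 0)) ∂P := by
  have hZ₀B : IndepFun Z₀ B P := by simpa using hindep.indepFun (show (1 : Fin 3) ≠ 0 by decide)
  have hZ₁B : IndepFun Z₁ B P := by simpa using hindep.indepFun (show (2 : Fin 3) ≠ 0 by decide)
  have hPB0 : P.real (B ⁻¹' {0}) = 1 - p :=
    (congrArg ENNReal.toReal hB0).trans (ENNReal.toReal_ofReal (sub_pos.mpr hp1).le)
  have hPB1 : P.real (B ⁻¹' {1}) = p :=
    (congrArg ENNReal.toReal hB1).trans (ENNReal.toReal_ofReal hp.le)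
  set g : ℝ → ℝ := fun x =>
    β * (1 - p) * gaussianPDFReal 0 μ x - (1 - β) * p * gaussianPDFReal 0 (σ ^ 2 + μ) x
  have hrisk : ∀ S : Set ℝ, ∀ [DecidablePred (· ∈ S)], MeasurableSet S →
      ∫ ω, (β * (if Q ω ∈ S ∧ B ω = 0 then 1 else 0)
        + (1 - β) * (if Q ω ∉ S ∧ B ω = 1 then 1 else 0)) ∂P
      = (1 - β) * p + ∫ x in S, g x := fun S _ hS => by
    rw [integral_weightedError_eq hB hZ₀ hZ₁ hZ₀B hZ₁B hQ β hS, hZ₀law, hZ₁law, hPB0, hPB1,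
      mul_measureReal_add_mul_measureReal_compl_gaussianReal 0 _ _ hμ.ne' (by positivity) hS]
  have hthreshold : ∀ x, x ∈ {x : ℝ | τ' < x ^ 2} ↔ g x < 0 := fun x => by
    have := mul_gaussianPDFReal_lt_mul_gaussianPDFReal_add_iff (b := (1 - β) * p)
      (mul_pos hβ (sub_pos.mpr hp1)) (mul_pos (sub_pos.mpr hβ1) hp) hμ (pow_pos hσ 2) x
    rw [sub_neg, this, hτ']
    push_cast
    rfl
  have hT : MeasurableSet {x : ℝ | τ' < x ^ 2} := measurableSet_lt measurable_const (by fun_prop)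
  have hS : MeasurableSet (bhat ⁻¹' {1}) := hbhat (measurableSet_singleton 1)
  have hbhat0 : ∀ q, bhat q = 0 ↔ ¬ bhat q = 1 := fun q => by
    rcases hbhat01 q with h | h <;> simp [h]
  have hlhs := hrisk _ hT
  -- the instance under which `hrhs` matches the `if bhat (Q ω) = 1 ...` of the goal
  have : DecidablePred (· ∈ bhat ⁻¹' {1}) := fun q => Real.decidableEq (bhat q) 1
  have hrhs := hrisk _ hS
  simp only [Set.mem_ofPred_eq, not_lt] at hlhs
  simp only [Set.mem_preimage, Set.mem_singleton_iff, ← hbhat0] at hrhs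
  rw [hlhs, hrhs]
  gcongr 1
  exact setIntegral_le_setIntegral_of_mem_iff_neg (by fun_prop) hT hS hthreshold
end

section
/- Let ν be a probability measure on ℝ with finite first moment (∫ |x| dν(x) < ∞), let μ > 0, and let the pair (X, Q) have the joint law of (X, X + V) where X has law ν and V is independent with law N(0, μ). Set K(q, x) = (2πμ)^{−1/2} · exp(−(q − x)²/(2μ)). Suppose m : ℝ → ℝ is measurable and is a conditional median, i.e. for Lebesgue-a.e. q ∈ ℝ, ∫ 1_{x < m(q)} K(q, x) dν(x) = (1/2) ∫ K(q, x) dν(x). Then E[|m(Q) − X|] = ∫_{ℝ} ( ∫ 1_{x ≥ m(q)} · x · K(q, x) dν(x) − ∫ 1_{x < m(q)} · x · K(q, x) dν(x) ) dq, where the outer integral is with respect to Lebesgue measure on ℝ. -/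
open MeasureTheory ProbabilityTheory Real


lemma mmae_aux_q (ν : Measure ℝ) [IsProbabilityMeasure ν]
    (hmom : Integrable (fun x : ℝ => x) ν)
    (w : ℝ → ℝ) (hwm : Measurable w) (C : ℝ) (hw0 : ∀ x, 0 ≤ w x) (hwC : ∀ x, w x ≤ C)
    (a : ℝ)
    (hmed : ∫ x, (if x < a then w x else 0) ∂ν = (1 / 2) * ∫ x, w x ∂ν) :
    (∫ x, |a - x| * w x ∂ν
        = (∫ x, (if a ≤ x then x * w x else 0) ∂ν)
          - ∫ x, (if x < a then x * w x else 0) ∂ν)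
    ∧ ∫ x, |a - x| * w x ∂ν ≤ ∫ x, |x| * w x ∂ν
    ∧ Integrable (fun x => |a - x| * w x) ν
    ∧ Integrable (fun x => |x| * w x) ν := by
  have iabs : Integrable (fun x : ℝ => |x|) ν := hmom.abs
  have iw : Integrable w ν := by
    refine Integrable.mono' (integrable_const C) hwm.aestronglyMeasurable
      (ae_of_all _ fun x => ?_)
    rw [Real.norm_eq_abs, abs_of_nonneg (hw0 x)]; exact hwC x
  have ixw : Integrable (fun x => x * w x) ν := by
    refine Integrable.mono' (iabs.const_mul C) ((measurable_id.mul hwm).aestronglyMeasurable)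
      (ae_of_all _ fun x => ?_)
    rw [Real.norm_eq_abs, abs_mul]
    calc |x| * |w x| = |w x| * |x| := mul_comm _ _
      _ ≤ C * |x| := by
          refine mul_le_mul_of_nonneg_right ?_ (abs_nonneg x)
          rw [abs_of_nonneg (hw0 x)]; exact hwC x
  have ixw' : Integrable (fun x => |x| * w x) ν := by
    refine Integrable.mono' (iabs.const_mul C) ((measurable_abs.mul hwm).aestronglyMeasurable)
      (ae_of_all _ fun x => ?_)
    rw [Real.norm_eq_abs, abs_mul, abs_abs]
    calc |x| * |w x| = |w x| * |x| := mul_comm _ _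
      _ ≤ C * |x| := by
          refine mul_le_mul_of_nonneg_right ?_ (abs_nonneg x)
          rw [abs_of_nonneg (hw0 x)]; exact hwC x
  have iaxw : Integrable (fun x => |a - x| * w x) ν := by
    have hbd : Integrable (fun x : ℝ => C * (|a| + |x|)) ν :=
      (((integrable_const |a|).add iabs).const_mul C)
    refine Integrable.mono' hbd (((measurable_const.sub measurable_id).abs.mul hwm).aestronglyMeasurable)
      (ae_of_all _ fun x => ?_)
    rw [Real.norm_eq_abs, abs_mul, abs_abs, abs_of_nonneg (hw0 x)]
    have h1 : |a - x| ≤ |a| + |x| := (abs_sub a x)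
    have h2 : w x ≤ C := hwC x
    nlinarith [hw0 x, abs_nonneg (a - x), abs_nonneg a, abs_nonneg x]
  have hind : ∀ (f : ℝ → ℝ), Integrable f ν → Integrable (fun x => if x < a then f x else 0) ν := by
    intro f hf
    have : (fun x => if x < a then f x else 0) = Set.indicator (Set.Iio a) f := by
      funext x; simp [Set.indicator_apply, Set.mem_Iio]
    rw [this]; exact hf.indicator measurableSet_Iio
  have hind2 : ∀ (f : ℝ → ℝ), Integrable f ν → Integrable (fun x => if a ≤ x then f x else 0) ν := by
    intro f hf
    have : (fun x => if a ≤ x then f x else 0) = Set.indicator (Set.Ici a) f := by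
      funext x; simp [Set.indicator_apply, Set.mem_Ici]
    rw [this]; exact hf.indicator measurableSet_Ici
  have hmed2 : ∫ x, (if a ≤ x then w x else 0) ∂ν = (1 / 2) * ∫ x, w x ∂ν := by
    have hsp : (∫ x, (if x < a then w x else 0) ∂ν) + ∫ x, (if a ≤ x then w x else 0) ∂ν
        = ∫ x, w x ∂ν := by
      rw [← integral_add (hind w iw) (hind2 w iw)]
      refine integral_congr_ae (ae_of_all _ fun x => ?_)
      by_cases h : x < a
      · simp [h, not_le.mpr h]
      · simp [h, not_lt.mp h]
    rw [hmed] at hsp; linarith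
  refine ⟨?_, ?_, ?_, ?_⟩
  · have hpt : (fun x => |a - x| * w x)
        = fun x => (if a ≤ x then (x - a) * w x else 0) + (if x < a then (a - x) * w x else 0) := by
      funext x
      rcases le_or_gt a x with h | h
      · rw [if_pos h, if_neg (not_lt.mpr h), abs_of_nonpos (by linarith : a - x ≤ 0), add_zero]
        ring
      · rw [if_neg (not_le.mpr h), if_pos h, abs_of_pos (by linarith : 0 < a - x), zero_add]
    have e1 : ∫ x, (if a ≤ x then (x - a) * w x else 0) ∂ν
        = (∫ x, (if a ≤ x then x * w x else 0) ∂ν)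
          - a * ∫ x, (if a ≤ x then w x else 0) ∂ν := by
      have h : (fun x => if a ≤ x then (x - a) * w x else 0)
          = fun x => (if a ≤ x then x * w x else 0) - a * (if a ≤ x then w x else 0) := by
        funext x; by_cases h : a ≤ x <;> simp [h] <;> ring
      rw [h, integral_sub (hind2 _ ixw) ((hind2 _ iw).const_mul a), integral_const_mul]
    have e2 : ∫ x, (if x < a then (a - x) * w x else 0) ∂ν
        = a * (∫ x, (if x < a then w x else 0) ∂ν)
          - ∫ x, (if x < a then x * w x else 0) ∂ν := by
      have h : (fun x => if x < a then (a - x) * w x else 0)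
          = fun x => a * (if x < a then w x else 0) - (if x < a then x * w x else 0) := by
        funext x; by_cases h : x < a <;> simp [h] <;> ring
      rw [h, integral_sub ((hind _ iw).const_mul a) (hind _ ixw), integral_const_mul]
    have i1 : Integrable (fun x => if a ≤ x then (x - a) * w x else 0) ν := by
      refine hind2 _ ?_
      exact ixw.sub (iw.const_mul a) |>.congr (ae_of_all _ fun x => by simp; ring)
    have i2 : Integrable (fun x => if x < a then (a - x) * w x else 0) ν := by
      refine hind _ ?_
      exact (iw.const_mul a).sub ixw |>.congr (ae_of_all _ fun x => by simp; ring)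
    rw [hpt, integral_add i1 i2, e1, e2, hmed, hmed2]
    ring
  · have hpt2 : ∀ x, |a - x| * w x
        ≤ |x| * w x + a * ((if x < a then w x else 0) - (if a ≤ x then w x else 0)) := by
      intro x
      by_cases h : x < a
      · rw [if_pos h, if_neg (not_le.mpr h), abs_of_pos (by linarith : 0 < a - x)]
        nlinarith [hw0 x, neg_abs_le x]
      · rw [if_neg h, if_pos (not_lt.mp h), abs_of_nonpos (by linarith [not_lt.mp h] : a - x ≤ 0)]
        nlinarith [hw0 x, le_abs_self x]
    have idiff : Integrable (fun x => (if x < a then w x else 0) - (if a ≤ x then w x else 0)) ν :=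
      (hind _ iw).sub (hind2 _ iw)
    have idiff2 : Integrable (fun x => a * ((if x < a then w x else 0) - (if a ≤ x then w x else 0))) ν :=
      idiff.const_mul a
    have irhs : Integrable (fun x => |x| * w x
        + a * ((if x < a then w x else 0) - (if a ≤ x then w x else 0))) ν :=
      ixw'.add idiff2
    have hdiff : ∫ x, ((if x < a then w x else 0) - (if a ≤ x then w x else 0)) ∂ν = 0 := by
      rw [integral_sub (hind _ iw) (hind2 _ iw), hmed, hmed2]; ring
    calc ∫ x, |a - x| * w x ∂ν
        ≤ ∫ x, (|x| * w x + a * ((if x < a then w x else 0) - (if a ≤ x then w x else 0))) ∂ν :=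
          integral_mono iaxw irhs hpt2
      _ = ∫ x, |x| * w x ∂ν := by
          rw [integral_add ixw' idiff2, integral_const_mul, hdiff, mul_zero, add_zero]
  · exact iaxw
  · exact ixw'

/-- **Corollary 1 (scalar-channel MMAE).**  For the scalar Gaussian channel `Q = X + V`
with `X ∼ ν` (finite first moment) and `V ∼ N(0, μ)` independent of `X`, if `m` is a
conditional median with respect to the unnormalized posterior kernel
`K(q, x) = (2πμ)^{-1/2} exp(−(q − x)²/(2μ))`, then
`E[|m(Q) − X|] = ∫ (∫_{x ≥ m(q)} x K(q,x) dν(x) − ∫_{x < m(q)} x K(q,x) dν(x)) dq`,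
the outer integral over Lebesgue measure. -/
theorem mmae_conditional_median_value
    (ν : Measure ℝ) [IsProbabilityMeasure ν]
    (hmom : Integrable (fun x : ℝ => x) ν)
    (μ : NNReal) (hμ : 0 < μ)
    {Ω : Type*} [MeasurableSpace Ω] (P : Measure Ω) [IsProbabilityMeasure P]
    (X V : Ω → ℝ) (hX : Measurable X) (hV : Measurable V)
    (hXlaw : Measure.map X P = ν)
    (hVlaw : Measure.map V P = gaussianReal 0 μ)
    (hindep : IndepFun X V P)
    (Q : Ω → ℝ) (hQ : Q = fun ω => X ω + V ω)
    (K : ℝ → ℝ → ℝ)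
    (hK : ∀ q x, K q x = (2 * Real.pi * μ) ^ (-(1:ℝ) / 2)
        * Real.exp (-(q - x) ^ 2 / (2 * μ)))
    (m : ℝ → ℝ) (hm : Measurable m)
    (hmedian : ∀ᵐ q ∂(volume : Measure ℝ),
      ∫ x, (if x < m q then K q x else 0) ∂ν = (1 / 2) * ∫ x, K q x ∂ν) :
    ∫ ω, |m (Q ω) - X ω| ∂P
      = ∫ q, ((∫ x, (if m q ≤ x then x * K q x else 0) ∂ν)
          - ∫ x, (if x < m q then x * K q x else 0) ∂ν) ∂(volume : Measure ℝ) := by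
  subst hQ
  set C : ℝ := (2 * Real.pi * μ) ^ (-(1:ℝ) / 2) with hC
  have h2πμ : (0:ℝ) ≤ 2 * Real.pi * μ := by positivity
  have hC0 : 0 ≤ C := Real.rpow_nonneg h2πμ _
  have hKform : ∀ q x, K q x = gaussianPDFReal x μ q := by
    intro q x
    rw [hK, gaussianPDFReal]
    congr 1
    rw [hC, show (-(1:ℝ)/2) = -(1/2 : ℝ) by norm_num, Real.rpow_neg h2πμ,
      ← Real.sqrt_eq_rpow]
  have hK0 : ∀ q x, 0 ≤ K q x := fun q x => (hKform q x) ▸ gaussianPDFReal_nonneg x μ q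
  have hKC : ∀ q x, K q x ≤ C := by
    intro q x
    rw [hK]
    calc C * Real.exp (-(q - x) ^ 2 / (2 * μ)) ≤ C * 1 := by
          refine mul_le_mul_of_nonneg_left ?_ hC0
          refine Real.exp_le_one_iff.mpr ?_
          have : (0:ℝ) ≤ (q - x)^2 := sq_nonneg _
          have : (0:ℝ) < 2 * μ := by positivity
          apply div_nonpos_of_nonpos_of_nonneg <;> nlinarith
      _ = C := mul_one C
  have hKum : Measurable (Function.uncurry K) := by
    have : Function.uncurry K = fun p : ℝ × ℝ => C * Real.exp (-(p.1 - p.2) ^ 2 / (2 * μ)) := by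
      funext p; exact hK p.1 p.2
    rw [this]
    exact (Real.measurable_exp.comp
      (((measurable_fst.sub measurable_snd).pow_const 2).neg.div_const _)).const_mul C
  have hKqm : ∀ q, Measurable (fun x => K q x) := fun q => hKum.comp (measurable_prodMk_left)
  -- joint law
  have hjoint : Measure.map (fun ω => (X ω, V ω)) P = ν.prod (gaussianReal 0 μ) := by
    have h := (indepFun_iff_map_prod_eq_prod_map_map hX.aemeasurable hV.aemeasurable).mp hindep
    rwa [hXlaw, hVlaw] at h
  set G : ℝ → ENNReal := fun q => ∫⁻ x, ENNReal.ofReal (|m q - x| * K q x) ∂ν with hG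
  have hΦm : Measurable (fun p : ℝ × ℝ => ENNReal.ofReal (|m p.1 - p.2| * K p.1 p.2)) :=
    ENNReal.measurable_ofReal.comp (((hm.comp measurable_fst).sub measurable_snd).abs.mul hKum)
  have hΦm' : Measurable (fun p : ℝ × ℝ => ENNReal.ofReal (|m p.2 - p.1| * K p.2 p.1)) :=
    ENNReal.measurable_ofReal.comp (((hm.comp measurable_snd).sub measurable_fst).abs.mul
      (hKum.comp measurable_swap))
  have hGm : Measurable G := Measurable.lintegral_prod_right hΦm
  -- LHS chain
  have hLmeas : Measurable (fun ω => |m (X ω + V ω) - X ω|) := ((hm.comp (hX.add hV)).sub hX).abs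
  have hL1 : ∫ ω, |m (X ω + V ω) - X ω| ∂P
      = (∫⁻ ω, ENNReal.ofReal (|m (X ω + V ω) - X ω|) ∂P).toReal :=
    integral_eq_lintegral_of_nonneg_ae (ae_of_all _ fun ω => abs_nonneg _)
      hLmeas.aestronglyMeasurable
  have hpm : Measurable (fun p : ℝ × ℝ => ENNReal.ofReal (|m (p.1 + p.2) - p.1|)) :=
    ENNReal.measurable_ofReal.comp ((hm.comp (measurable_fst.add measurable_snd)).sub
      measurable_fst).abs
  have hL2 : ∫⁻ ω, ENNReal.ofReal (|m (X ω + V ω) - X ω|) ∂P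
      = ∫⁻ p : ℝ × ℝ, ENNReal.ofReal (|m (p.1 + p.2) - p.1|) ∂(ν.prod (gaussianReal 0 μ)) := by
    rw [← hjoint, lintegral_map hpm (hX.prodMk hV)]
  have hL3 : ∫⁻ p : ℝ × ℝ, ENNReal.ofReal (|m (p.1 + p.2) - p.1|) ∂(ν.prod (gaussianReal 0 μ))
      = ∫⁻ x, ∫⁻ v, ENNReal.ofReal (|m (x + v) - x|) ∂(gaussianReal 0 μ) ∂ν :=
    lintegral_prod _ hpm.aemeasurable
  have hInner : ∀ x : ℝ, ∫⁻ v, ENNReal.ofReal (|m (x + v) - x|) ∂(gaussianReal 0 μ)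
      = ∫⁻ q, ENNReal.ofReal (|m q - x| * K q x) ∂(volume : Measure ℝ) := by
    intro x
    have meas1 : Measurable (fun q : ℝ => ENNReal.ofReal (|m q - x|)) :=
      ENNReal.measurable_ofReal.comp (hm.sub measurable_const).abs
    have hmap : Measure.map (fun v : ℝ => x + v) (gaussianReal 0 μ) = gaussianReal x μ := by
      have h := gaussianReal_map_const_add (μ := 0) (v := μ) x
      simpa using h
    calc ∫⁻ v, ENNReal.ofReal (|m (x + v) - x|) ∂(gaussianReal 0 μ)
        = ∫⁻ q, ENNReal.ofReal (|m q - x|) ∂(Measure.map (fun v : ℝ => x + v) (gaussianReal 0 μ)) := by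
          rw [lintegral_map meas1 (measurable_const_add x)]
      _ = ∫⁻ q, ENNReal.ofReal (|m q - x|) ∂((volume : Measure ℝ).withDensity (gaussianPDF x μ)) := by
          rw [hmap, gaussianReal_of_var_ne_zero x hμ.ne']
      _ = ∫⁻ q, gaussianPDF x μ q * ENNReal.ofReal (|m q - x|) ∂(volume : Measure ℝ) := by
          rw [lintegral_withDensity_eq_lintegral_mul _ (measurable_gaussianPDF x μ) meas1]
          rfl
      _ = ∫⁻ q, ENNReal.ofReal (|m q - x| * K q x) ∂(volume : Measure ℝ) := by
          refine lintegral_congr fun q => ?_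
          rw [ENNReal.ofReal_mul (abs_nonneg _), gaussianPDF, hKform q x, mul_comm]
  have hL4 : ∫⁻ x, ∫⁻ q, ENNReal.ofReal (|m q - x| * K q x) ∂(volume : Measure ℝ) ∂ν
      = ∫⁻ q, G q ∂(volume : Measure ℝ) :=
    lintegral_lintegral_swap hΦm'.aemeasurable
  -- finiteness
  have hBound : ∀ᵐ q ∂(volume : Measure ℝ),
      G q ≤ ∫⁻ x, ENNReal.ofReal (|x| * K q x) ∂ν := by
    filter_upwards [hmedian] with q hq
    obtain ⟨-, h2, iaxw, ixw'⟩ := mmae_aux_q ν hmom (fun x => K q x) (hKqm q) C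
      (hK0 q) (hKC q) (m q) hq
    have e1 : G q = ENNReal.ofReal (∫ x, |m q - x| * K q x ∂ν) :=
      (ofReal_integral_eq_lintegral_ofReal iaxw
        (ae_of_all _ fun x => mul_nonneg (abs_nonneg _) (hK0 q x))).symm
    have e2 : ∫⁻ x, ENNReal.ofReal (|x| * K q x) ∂ν = ENNReal.ofReal (∫ x, |x| * K q x ∂ν) :=
      (ofReal_integral_eq_lintegral_ofReal ixw'
        (ae_of_all _ fun x => mul_nonneg (abs_nonneg _) (hK0 q x))).symm
    rw [e1, e2]
    exact ENNReal.ofReal_le_ofReal h2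
  have hIabs : ∫⁻ q, ∫⁻ x, ENNReal.ofReal (|x| * K q x) ∂ν ∂(volume : Measure ℝ)
      = ∫⁻ x, ENNReal.ofReal |x| ∂ν := by
    have hswap : ∫⁻ q, ∫⁻ x, ENNReal.ofReal (|x| * K q x) ∂ν ∂(volume : Measure ℝ)
        = ∫⁻ x, ∫⁻ q, ENNReal.ofReal (|x| * K q x) ∂(volume : Measure ℝ) ∂ν :=
      lintegral_lintegral_swap (ENNReal.measurable_ofReal.comp
        ((measurable_snd.abs.mul (hKum.comp measurable_id)))).aemeasurable
    rw [hswap]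
    refine lintegral_congr fun x => ?_
    calc ∫⁻ q, ENNReal.ofReal (|x| * K q x) ∂(volume : Measure ℝ)
        = ∫⁻ q, ENNReal.ofReal |x| * ENNReal.ofReal (K q x) ∂(volume : Measure ℝ) := by
          refine lintegral_congr fun q => ENNReal.ofReal_mul (abs_nonneg _)
      _ = ENNReal.ofReal |x| * ∫⁻ q, ENNReal.ofReal (K q x) ∂(volume : Measure ℝ) := by
          have hx : Measurable fun q : ℝ => ENNReal.ofReal (K q x) :=
            ENNReal.measurable_ofReal.comp (hKum.comp (measurable_id.prodMk measurable_const))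
          rw [lintegral_const_mul _ hx]
      _ = ENNReal.ofReal |x| * 1 := by
          congr 1
          have : ∀ q, ENNReal.ofReal (K q x) = gaussianPDF x μ q := by
            intro q; rw [gaussianPDF, hKform q x]
          simp_rw [this]
          exact lintegral_gaussianPDF_eq_one x hμ.ne'
      _ = ENNReal.ofReal |x| := mul_one _
  have hfin : ∫⁻ q, G q ∂(volume : Measure ℝ) ≠ ⊤ := by
    refine ne_of_lt ?_
    calc ∫⁻ q, G q ∂(volume : Measure ℝ)
        ≤ ∫⁻ q, ∫⁻ x, ENNReal.ofReal (|x| * K q x) ∂ν ∂(volume : Measure ℝ) :=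
          lintegral_mono_ae hBound
      _ = ∫⁻ x, ENNReal.ofReal |x| ∂ν := hIabs
      _ < ⊤ := by
          have h := hmom.2
          rw [hasFiniteIntegral_iff_norm] at h
          simpa [Real.norm_eq_abs] using h
  -- RHS
  have hae : (fun q => (∫ x, (if m q ≤ x then x * K q x else 0) ∂ν)
        - ∫ x, (if x < m q then x * K q x else 0) ∂ν)
      =ᵐ[(volume : Measure ℝ)] fun q => (G q).toReal := by
    filter_upwards [hmedian] with q hq
    obtain ⟨h1, -, iaxw, -⟩ := mmae_aux_q ν hmom (fun x => K q x) (hKqm q) C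
      (hK0 q) (hKC q) (m q) hq
    have e1 : G q = ENNReal.ofReal (∫ x, |m q - x| * K q x ∂ν) :=
      (ofReal_integral_eq_lintegral_ofReal iaxw
        (ae_of_all _ fun x => mul_nonneg (abs_nonneg _) (hK0 q x))).symm
    rw [← h1, e1, ENNReal.toReal_ofReal
      (integral_nonneg fun x => mul_nonneg (abs_nonneg _) (hK0 q x))]
  calc ∫ ω, |m (X ω + V ω) - X ω| ∂P
      = (∫⁻ q, G q ∂(volume : Measure ℝ)).toReal := by
        rw [hL1, hL2, hL3, ← hL4]
        congr 1
        exact lintegral_congr fun x => hInner x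
    _ = ∫ q, (G q).toReal ∂(volume : Measure ℝ) :=
        (integral_toReal hGm.aemeasurable (ae_lt_top hGm hfin)).symm
    _ = ∫ q, ((∫ x, (if m q ≤ x then x * K q x else 0) ∂ν)
          - ∫ x, (if x < m q then x * K q x else 0) ∂ν) ∂(volume : Measure ℝ) :=
        (integral_congr_ae hae).symm
end
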